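/- (One-step IHT contraction.) Let A be an n×N real matrix satisfying aRIP(2k; L₂, U₂) and aRIP(3k; L₃, U₃), and let ω ∈ (0,1). Let x ∈ ℝ^N be k-sparse, let e ∈ ℝⁿ, and set y = Ax + e. Let v ∈ ℝ^N be k-sparse, set u := v + ω·A*(y − Av), let T be an index set with |T| = k selecting k largest-magnitude entries of u, and set w := u_T. Then ‖x − w‖₂ ≤ 2√2·max{ω(1+U₃) − 1, 1 − ω(1−L₃)}·‖x − v‖₂ + 2ω√(1+U₂)·‖e‖₂. -/

import Mathlib

/-
Write `z = x - v` and `M = 1 - ω AᵀA`, so that `x - u = M z - ω Aᵀ e`. Since `w` keeps `k` largest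
entries of `u` and `x` is supported on a `k`-set `S`, the discarded part of `u` on `S \ T` is
dominated by the part of `x - u` on `T \ S`, whence `‖x - w‖ ≤ 2 ‖(x - u)_{S ∪ T}‖`.
On vectors supported on the `3k`-set `S ∪ T ∪ supp v` the `3k`-RIP bounds the quadratic form of the
symmetric matrix `M` by `ρ = max (ω(1+U₃) - 1) (1 - ω(1-L₃))`, and polarization upgrades this to
`‖(M z)_{S ∪ T}‖ ≤ ρ ‖z‖`. By duality and the `2k`-RIP, `‖(Aᵀ e)_{S ∪ T}‖ ≤ √(1+U₂) ‖e‖`.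
This gives the bound even with `2` in place of `2√2`.
-/

open Finset Matrix

noncomputable def euclNorm {α : Type*} [Fintype α] (v : α → ℝ) : ℝ :=
  Real.sqrt (∑ i, (v i) ^ 2)

def restr {N : ℕ} (I : Finset (Fin N)) (x : Fin N → ℝ) : Fin N → ℝ :=
  fun i => if i ∈ I then x i else 0

def sparse {N : ℕ} (k : ℕ) (x : Fin N → ℝ) : Prop :=
  (Finset.univ.filter fun i => x i ≠ 0).card ≤ k

def aRIP {n N : ℕ} (A : Matrix (Fin n) (Fin N) ℝ) (m : ℕ) (L U : ℝ) : Prop :=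
  ∀ x : Fin N → ℝ, sparse m x →
    (1 - L) * euclNorm x ^ 2 ≤ euclNorm (A.mulVec x) ^ 2 ∧
      euclNorm (A.mulVec x) ^ 2 ≤ (1 + U) * euclNorm x ^ 2

def selects {N : ℕ} (T : Finset (Fin N)) (v : Fin N → ℝ) : Prop :=
  ∀ i ∈ T, ∀ j ∉ T, |v j| ≤ |v i|

def subCols {n N : ℕ} (A : Matrix (Fin n) (Fin N) ℝ) (I : Finset (Fin N)) :
    Matrix (Fin n) I ℝ :=
  fun r c => A r (c : Fin N)

noncomputable def gram {n N : ℕ} (A : Matrix (Fin n) (Fin N) ℝ) (I : Finset (Fin N)) :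
    Matrix I I ℝ :=
  (subCols A I)ᵀ * subCols A I

noncomputable def pinvApply {n N : ℕ} (A : Matrix (Fin n) (Fin N) ℝ) (I : Finset (Fin N))
    (y : Fin n → ℝ) : I → ℝ :=
  ((gram A I)⁻¹ * (subCols A I)ᵀ).mulVec y

noncomputable def pinvVec {n N : ℕ} (A : Matrix (Fin n) (Fin N) ℝ) (I : Finset (Fin N))
    (y : Fin n → ℝ) : Fin N → ℝ :=
  fun i => if h : i ∈ I then pinvApply A I y ⟨i, h⟩ else 0

section EuclNorm

variable {α : Type*} [Fintype α]

lemma euclNorm_eq_norm (v : α → ℝ) : euclNorm v = ‖WithLp.toLp 2 v‖ := by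
  simp [euclNorm, EuclideanSpace.norm_eq]

lemma euclNorm_nonneg (v : α → ℝ) : 0 ≤ euclNorm v := Real.sqrt_nonneg _

lemma euclNorm_sq (v : α → ℝ) : euclNorm v ^ 2 = v ⬝ᵥ v := by
  rw [euclNorm, Real.sq_sqrt (by positivity)]
  simp [dotProduct, sq]

lemma euclNorm_eq_zero {v : α → ℝ} : euclNorm v = 0 ↔ v = 0 := by
  simp [euclNorm_eq_norm]

lemma euclNorm_add_le (v w : α → ℝ) : euclNorm (v + w) ≤ euclNorm v + euclNorm w := by
  simpa only [euclNorm_eq_norm, WithLp.toLp_add] using norm_add_le _ _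

lemma euclNorm_sub_le (v w : α → ℝ) : euclNorm (v - w) ≤ euclNorm v + euclNorm w := by
  simpa only [euclNorm_eq_norm, WithLp.toLp_sub] using norm_sub_le _ _

lemma euclNorm_smul (c : ℝ) (v : α → ℝ) : euclNorm (c • v) = |c| * euclNorm v := by
  simp only [euclNorm_eq_norm, WithLp.toLp_smul, norm_smul, Real.norm_eq_abs]

lemma dotProduct_le_euclNorm_mul (v w : α → ℝ) : v ⬝ᵥ w ≤ euclNorm v * euclNorm w := by
  simpa [euclNorm_eq_norm, EuclideanSpace.inner_eq_star_dotProduct, dotProduct_comm]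
    using real_inner_le_norm (WithLp.toLp 2 v) (WithLp.toLp 2 w)

lemma dotProduct_mulVec_le_of_abs_le {M : Matrix α α ℝ} (hM : M.IsSymm)
    {V : Submodule ℝ (α → ℝ)} {ρ : ℝ} (hρ : ∀ s ∈ V, |s ⬝ᵥ M *ᵥ s| ≤ ρ * euclNorm s ^ 2)
    {a b : α → ℝ} (ha : a ∈ V) (hb : b ∈ V) :
    a ⬝ᵥ M *ᵥ b ≤ ρ * euclNorm a * euclNorm b := by
  have polar : ∀ p ∈ V, ∀ r ∈ V, 2 * (p ⬝ᵥ M *ᵥ r) ≤ ρ * (euclNorm p ^ 2 + euclNorm r ^ 2) := by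
    intro p hp r hr
    have hsymm : r ⬝ᵥ M *ᵥ p = p ⬝ᵥ M *ᵥ r := by
      rw [← dotProduct_transpose_mulVec, hM.eq]
    have hplus := (le_abs_self _).trans (hρ (p + r) (V.add_mem hp hr))
    have hminus := (neg_abs_le _).trans' (neg_le_neg (hρ (p - r) (V.sub_mem hp hr)))
    simp only [euclNorm_sq, mulVec_add, mulVec_sub, add_dotProduct, dotProduct_add,
      sub_dotProduct, dotProduct_sub, hsymm, dotProduct_comm r p] at hplus hminus ⊢
    linarith
  rcases (euclNorm_nonneg a).eq_or_lt with ha0 | ha0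
  · rw [← ha0, euclNorm_eq_zero.1 ha0.symm]
    simp
  rcases (euclNorm_nonneg b).eq_or_lt with hb0 | hb0
  · rw [← hb0, euclNorm_eq_zero.1 hb0.symm]
    simp
  -- rescaling `a` by `‖b‖` and `b` by `‖a‖` makes the AM-GM step in `polar` tight
  have := polar _ (V.smul_mem (euclNorm b) ha) _ (V.smul_mem (euclNorm a) hb)
  simp only [euclNorm_smul, mulVec_smul, smul_dotProduct, dotProduct_smul, smul_eq_mul,
    abs_of_pos ha0, abs_of_pos hb0] at this
  have hab : 0 < 2 * (euclNorm a * euclNorm b) := by positivity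
  refine le_of_mul_le_mul_left ?_ hab
  nlinarith

end EuclNorm

lemma Finset.sum_le_sum_of_card_le_of_forall_le {ι M : Type*} [AddCommMonoid M] [LinearOrder M]
    [IsOrderedAddMonoid M] {P Q : Finset ι} {f : ι → M} (hcard : P.card ≤ Q.card)
    (hQ : ∀ i ∈ Q, 0 ≤ f i) (h : ∀ j ∈ P, ∀ i ∈ Q, f j ≤ f i) :
    ∑ j ∈ P, f j ≤ ∑ i ∈ Q, f i := by
  rcases P.eq_empty_or_nonempty with rfl | hP
  · simpa using Finset.sum_nonneg hQ
  have hQne : Q.Nonempty := Finset.card_pos.1 (hP.card_pos.trans_le hcard)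
  obtain ⟨i₀, hi₀, hmin⟩ := Q.exists_min_image f hQne
  calc ∑ j ∈ P, f j ≤ P.card • f i₀ := Finset.sum_le_card_nsmul _ _ _ fun j hj => h j hj i₀ hi₀
    _ ≤ Q.card • f i₀ := nsmul_le_nsmul_left (hQ i₀ hi₀) hcard
    _ ≤ ∑ i ∈ Q, f i := Finset.card_nsmul_le_sum _ _ _ hmin

section Restriction

variable {N : ℕ}

lemma restr_sub (I : Finset (Fin N)) (f g : Fin N → ℝ) :
    restr I (f - g) = restr I f - restr I g := by
  ext i; by_cases hi : i ∈ I <;> simp [restr, hi]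

lemma restr_smul (I : Finset (Fin N)) (c : ℝ) (f : Fin N → ℝ) :
    restr I (c • f) = c • restr I f := by
  ext i; by_cases hi : i ∈ I <;> simp [restr, hi]

lemma restr_apply_of_notMem {I : Finset (Fin N)} {i : Fin N} (hi : i ∉ I) (f : Fin N → ℝ) :
    restr I f i = 0 := if_neg hi

lemma restr_dotProduct_self (I : Finset (Fin N)) (f : Fin N → ℝ) :
    restr I f ⬝ᵥ restr I f = restr I f ⬝ᵥ f := by
  refine Finset.sum_congr rfl fun i _ => ?_
  by_cases hi : i ∈ I <;> simp [restr, hi]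

lemma euclNorm_restr (I : Finset (Fin N)) (f : Fin N → ℝ) :
    euclNorm (restr I f) = √(∑ i ∈ I, f i ^ 2) := by
  simp [euclNorm, restr, ite_pow, Finset.sum_ite_mem]

lemma sparse_of_forall_notMem {m : ℕ} {C : Finset (Fin N)} (hC : C.card ≤ m) {f : Fin N → ℝ}
    (hf : ∀ i ∉ C, f i = 0) : sparse m f :=
  (Finset.card_le_card fun i hi => by_contra fun hiC => by simp [hf i hiC] at hi).trans hC

lemma euclNorm_sub_restr_le {x u : Fin N → ℝ} {S T : Finset (Fin N)} (hx : ∀ i ∉ S, x i = 0)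
    (hcard : S.card ≤ T.card) (hT : selects T u) :
    euclNorm (x - restr T u) ≤ 2 * euclNorm (restr (S ∪ T) (x - u)) := by
  have hsplit : x - restr T u = restr (S ∪ T) (x - u) + restr (S \ T) u := by
    ext i
    by_cases hiT : i ∈ T <;> by_cases hiS : i ∈ S <;> simp [restr, hiT, hiS, hx]
  have htail : euclNorm (restr (S \ T) u) ≤ euclNorm (restr (S ∪ T) (x - u)) := by
    rw [euclNorm_restr, euclNorm_restr]
    refine Real.sqrt_le_sqrt ?_
    calc ∑ i ∈ S \ T, u i ^ 2 ≤ ∑ i ∈ T \ S, u i ^ 2 :=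
          Finset.sum_le_sum_of_card_le_of_forall_le (Finset.card_sdiff_le_card_sdiff_iff.2 hcard)
            (fun i _ => sq_nonneg _) fun j hj i hi =>
              sq_le_sq.2 (hT i (Finset.mem_sdiff.1 hi).1 j (Finset.mem_sdiff.1 hj).2)
      _ = ∑ i ∈ T \ S, (x i - u i) ^ 2 :=
          Finset.sum_congr rfl fun i hi => by rw [hx i (Finset.mem_sdiff.1 hi).2]; ring
      _ ≤ ∑ i ∈ S ∪ T, (x i - u i) ^ 2 :=
          Finset.sum_le_sum_of_subset_of_nonneg
            (Finset.sdiff_subset.trans Finset.subset_union_right) fun i _ _ => sq_nonneg _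
  rw [hsplit]
  linarith [euclNorm_add_le (restr (S ∪ T) (x - u)) (restr (S \ T) u)]

lemma euclNorm_restr_mulVec_le {M : Matrix (Fin N) (Fin N) ℝ} (hM : M.IsSymm)
    {B D : Finset (Fin N)} (hBD : B ⊆ D) {ρ : ℝ}
    (hρ : ∀ s : Fin N → ℝ, (∀ i ∉ D, s i = 0) → |s ⬝ᵥ M *ᵥ s| ≤ ρ * euclNorm s ^ 2)
    {z : Fin N → ℝ} (hz : ∀ i ∉ D, z i = 0) :
    euclNorm (restr B (M *ᵥ z)) ≤ ρ * euclNorm z := by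
  let V : Submodule ℝ (Fin N → ℝ) := Submodule.pi (↑D)ᶜ fun _ => ⊥
  have hV : ∀ s, s ∈ V ↔ ∀ i ∉ D, s i = 0 := by simp [V, Submodule.mem_pi]
  set a := restr B (M *ᵥ z)
  have ha : a ∈ V := (hV a).2 fun i hi => restr_apply_of_notMem (fun hiB => hi (hBD hiB)) _
  have hsq : euclNorm a ^ 2 ≤ ρ * euclNorm a * euclNorm z := by
    rw [euclNorm_sq, restr_dotProduct_self]
    exact dotProduct_mulVec_le_of_abs_le hM (fun s hs => hρ s ((hV s).1 hs)) ha ((hV z).2 hz)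
  have hρz : 0 ≤ ρ * euclNorm z := by
    rcases (euclNorm_nonneg z).eq_or_lt with hz0 | hzpos
    · rw [← hz0, mul_zero]
    · refine nonneg_of_mul_nonneg_left ?_ hzpos
      rw [mul_assoc, ← sq]
      exact (abs_nonneg _).trans (hρ z hz)
  nlinarith [euclNorm_nonneg a]

end Restriction

section RIP

variable {n N : ℕ}

lemma isSymm_one_sub_smul_transpose_mul (A : Matrix (Fin n) (Fin N) ℝ) (ω : ℝ) :
    (1 - ω • (Aᵀ * A)).IsSymm :=
  isSymm_one.sub (IsSymm.smul (by simp [IsSymm, transpose_mul]) ω)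

lemma dotProduct_one_sub_smul_transpose_mul_mulVec_self (A : Matrix (Fin n) (Fin N) ℝ) (ω : ℝ)
    (s : Fin N → ℝ) :
    s ⬝ᵥ (1 - ω • (Aᵀ * A)) *ᵥ s = euclNorm s ^ 2 - ω * euclNorm (A *ᵥ s) ^ 2 := by
  rw [sub_mulVec, one_mulVec, smul_mulVec, ← mulVec_mulVec, dotProduct_sub, dotProduct_smul,
    dotProduct_transpose_mulVec, euclNorm_sq, euclNorm_sq, smul_eq_mul]

variable {A : Matrix (Fin n) (Fin N) ℝ} {m : ℕ} {L U : ℝ}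

lemma aRIP.euclNorm_mulVec_le (h : aRIP A m L U) {s : Fin N → ℝ} (hs : sparse m s) :
    euclNorm (A *ᵥ s) ≤ √(1 + U) * euclNorm s :=
  calc euclNorm (A *ᵥ s) = √(euclNorm (A *ᵥ s) ^ 2) := (Real.sqrt_sq (euclNorm_nonneg _)).symm
    _ ≤ √((1 + U) * euclNorm s ^ 2) := Real.sqrt_le_sqrt (h s hs).2
    _ = √(1 + U) * euclNorm s := by
        rw [Real.sqrt_mul' _ (sq_nonneg _), Real.sqrt_sq (euclNorm_nonneg _)]

lemma aRIP.abs_dotProduct_mulVec_self_le (h : aRIP A m L U) {ω : ℝ} (hω : 0 ≤ ω)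
    {s : Fin N → ℝ} (hs : sparse m s) :
    |s ⬝ᵥ (1 - ω • (Aᵀ * A)) *ᵥ s| ≤
      max (ω * (1 + U) - 1) (1 - ω * (1 - L)) * euclNorm s ^ 2 := by
  obtain ⟨hlow, hup⟩ := h s hs
  have hleft := mul_le_mul_of_nonneg_right
    (le_max_left (ω * (1 + U) - 1) (1 - ω * (1 - L))) (sq_nonneg (euclNorm s))
  have hright := mul_le_mul_of_nonneg_right
    (le_max_right (ω * (1 + U) - 1) (1 - ω * (1 - L))) (sq_nonneg (euclNorm s))
  rw [dotProduct_one_sub_smul_transpose_mul_mulVec_self, abs_le]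
  constructor <;> nlinarith [mul_le_mul_of_nonneg_left hlow hω, mul_le_mul_of_nonneg_left hup hω]

lemma euclNorm_restr_transpose_mulVec_le (h : aRIP A m L U) {B : Finset (Fin N)}
    (hB : B.card ≤ m) (e : Fin n → ℝ) :
    euclNorm (restr B (Aᵀ *ᵥ e)) ≤ √(1 + U) * euclNorm e := by
  set r := restr B (Aᵀ *ᵥ e)
  have hr : sparse m r := sparse_of_forall_notMem hB fun i hi => restr_apply_of_notMem hi _
  have hsq : euclNorm r ^ 2 ≤ √(1 + U) * euclNorm e * euclNorm r :=
    calc euclNorm r ^ 2 = A *ᵥ r ⬝ᵥ e := by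
          rw [euclNorm_sq, restr_dotProduct_self, dotProduct_transpose_mulVec, dotProduct_comm]
      _ ≤ euclNorm (A *ᵥ r) * euclNorm e := dotProduct_le_euclNorm_mul _ _
      _ ≤ √(1 + U) * euclNorm r * euclNorm e :=
          mul_le_mul_of_nonneg_right (h.euclNorm_mulVec_le hr) (euclNorm_nonneg e)
      _ = √(1 + U) * euclNorm e * euclNorm r := by ring
  nlinarith [euclNorm_nonneg r, mul_nonneg (Real.sqrt_nonneg (1 + U)) (euclNorm_nonneg e)]

end RIP

theorem stmt16_general {n N k : ℕ} (A : Matrix (Fin n) (Fin N) ℝ)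
    (L₂ U₂ L₃ U₃ : ℝ)
    (h₂ : aRIP A (2 * k) L₂ U₂) (h₃ : aRIP A (3 * k) L₃ U₃)
    (ω : ℝ) (hω0 : 0 < ω)
    (x : Fin N → ℝ) (hx : sparse k x) (e y : Fin n → ℝ)
    (hy : y = fun i => A.mulVec x i + e i)
    (v : Fin N → ℝ) (hv : sparse k v)
    (u : Fin N → ℝ)
    (hu : u = fun i => v i + ω * Aᵀ.mulVec (fun j => y j - A.mulVec v j) i)
    (T : Finset (Fin N)) (hTcard : T.card = k) (hTsel : selects T u)
    (w : Fin N → ℝ) (hw : w = restr T u) :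
    euclNorm (fun i => x i - w i) ≤
      2 * Real.sqrt 2 * max (ω * (1 + U₃) - 1) (1 - ω * (1 - L₃))
        * euclNorm (fun i => x i - v i)
      + 2 * ω * Real.sqrt (1 + U₂) * euclNorm e := by
  set S := Finset.univ.filter fun i => x i ≠ 0
  set V := Finset.univ.filter fun i => v i ≠ 0
  set M := 1 - ω • (Aᵀ * A)
  set ρ := max (ω * (1 + U₃) - 1) (1 - ω * (1 - L₃))
  show euclNorm (x - w) ≤ 2 * √2 * ρ * euclNorm (x - v) + 2 * ω * √(1 + U₂) * euclNorm e
  have hxS : ∀ i ∉ S, x i = 0 := by simp [S]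
  have hvV : ∀ i ∉ V, v i = 0 := by simp [V]
  have hS : S.card ≤ k := hx
  have hV : V.card ≤ k := hv
  have hB : (S ∪ T).card ≤ 2 * k := by grind [Finset.card_union_le]
  have hD : (S ∪ T ∪ V).card ≤ 3 * k := by grind [Finset.card_union_le]
  have hxu : x - u = M *ᵥ (x - v) - ω • (Aᵀ *ᵥ e) := by
    subst hu hy
    change x - (v + ω • Aᵀ *ᵥ (A *ᵥ x + e - A *ᵥ v)) = _
    simp only [M, sub_mulVec, one_mulVec, smul_mulVec, ← mulVec_mulVec, mulVec_sub, mulVec_add]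
    module
  have hsignal : euclNorm (restr (S ∪ T) (M *ᵥ (x - v))) ≤ ρ * euclNorm (x - v) :=
    euclNorm_restr_mulVec_le (isSymm_one_sub_smul_transpose_mul A ω) Finset.subset_union_left
      (fun s hs => h₃.abs_dotProduct_mulVec_self_le hω0.le (sparse_of_forall_notMem hD hs))
      (fun i hi => by simp only [Finset.mem_union, not_or] at hi; simp [hxS i hi.1.1, hvV i hi.2])
  have hnoise := euclNorm_restr_transpose_mulVec_le h₂ hB e
  calc euclNorm (x - w) ≤ 2 * euclNorm (restr (S ∪ T) (x - u)) :=
        hw ▸ euclNorm_sub_restr_le hxS (hTcard ▸ hS) hTsel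
    _ ≤ 2 * (ρ * euclNorm (x - v) + ω * (√(1 + U₂) * euclNorm e)) := by
        have := euclNorm_sub_le (restr (S ∪ T) (M *ᵥ (x - v))) (ω • restr (S ∪ T) (Aᵀ *ᵥ e))
        rw [euclNorm_smul, abs_of_pos hω0] at this
        rw [hxu, restr_sub, restr_smul]
        linarith [mul_le_mul_of_nonneg_left hnoise hω0.le]
    _ ≤ _ := by
        linarith [mul_le_mul_of_nonneg_right (Real.one_le_sqrt.2 one_le_two)
          ((euclNorm_nonneg _).trans hsignal)]

theorem stmt16 {n N k : ℕ} (A : Matrix (Fin n) (Fin N) ℝ)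
    (L₂ U₂ L₃ U₃ : ℝ)
    (hL₂0 : 0 ≤ L₂) (hU₂0 : 0 ≤ U₂) (hL₃0 : 0 ≤ L₃) (hU₃0 : 0 ≤ U₃)
    (h₂ : aRIP A (2 * k) L₂ U₂) (h₃ : aRIP A (3 * k) L₃ U₃)
    (ω : ℝ) (hω0 : 0 < ω) (hω1 : ω < 1)
    (x : Fin N → ℝ) (hx : sparse k x) (e y : Fin n → ℝ)
    (hy : y = fun i => A.mulVec x i + e i)
    (v : Fin N → ℝ) (hv : sparse k v)
    (u : Fin N → ℝ)
    (hu : u = fun i => v i + ω * Aᵀ.mulVec (fun j => y j - A.mulVec v j) i)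
    (T : Finset (Fin N)) (hTcard : T.card = k) (hTsel : selects T u)
    (w : Fin N → ℝ) (hw : w = restr T u) :
    euclNorm (fun i => x i - w i) ≤
      2 * Real.sqrt 2 * max (ω * (1 + U₃) - 1) (1 - ω * (1 - L₃))
        * euclNorm (fun i => x i - v i)
      + 2 * ω * Real.sqrt (1 + U₂) * euclNorm e :=
  stmt16_general A L₂ U₂ L₃ U₃ h₂ h₃ ω hω0 x hx e y hy v hv u hu T hTcard hTsel w hw
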